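/- Let χ₁, ..., χ_n be positive reals and c : Fin n → Fin n → ℝ be nonnegative. Then ∑_{i,j} (∑_k χ_k^{-2} c k i · c k j) ≤ (∑_i χ_i) · (∑_{i,k} χ_k^{-2} χ_i^{-1} (c k i)²). -/
import Mathlib


open Finset in
/-- The core Cauchy–Schwarz step of Lemma 3.1: for positive reals `χ₁,…,χ_n` and
nonnegative `c k i`, `∑_{i,j,k} χ_k⁻² c_{k,i} c_{k,j} ≤ (∑_i χ_i) ∑_{i,k} χ_k⁻² χ_i⁻¹ c_{k,i}²`. -/
theorem stmt3 (n : ℕ) (hn : 1 ≤ n) (χ : Fin n → ℝ) (hχ : ∀ i, 0 < χ i)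
    (c : Fin n → Fin n → ℝ) (hc : ∀ k i, 0 ≤ c k i) :
    ∑ i, ∑ j, ∑ k, (χ k)⁻¹ ^ 2 * c k i * c k j ≤
      (∑ i, χ i) * ∑ i, ∑ k, (χ k)⁻¹ ^ 2 * (χ i)⁻¹ * (c k i) ^ 2 := by
  have key : ∀ k : Fin n, (∑ i, c k i) ^ 2 ≤ (∑ i, χ i) * ∑ i, (χ i)⁻¹ * (c k i) ^ 2 := by
    intro k
    have h := Finset.sum_mul_sq_le_sq_mul_sq Finset.univ
      (fun i => Real.sqrt (χ i)) (fun i => c k i / Real.sqrt (χ i))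
    have e1 : ∀ i : Fin n, Real.sqrt (χ i) * (c k i / Real.sqrt (χ i)) = c k i := by
      intro i
      field_simp [Real.sqrt_ne_zero'.mpr (hχ i)]
    have e2 : ∀ i : Fin n, Real.sqrt (χ i) ^ 2 = χ i := fun i => Real.sq_sqrt (hχ i).le
    have e3 : ∀ i : Fin n, (c k i / Real.sqrt (χ i)) ^ 2 = (χ i)⁻¹ * (c k i) ^ 2 := by
      intro i
      rw [div_pow, Real.sq_sqrt (hχ i).le]
      ring
    simp only [e1, e2, e3] at h
    exact h
  calc ∑ i, ∑ j, ∑ k, (χ k)⁻¹ ^ 2 * c k i * c k j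
      = ∑ k, (χ k)⁻¹ ^ 2 * (∑ i, c k i) ^ 2 := by
        have h1 : ∀ i : Fin n, (∑ j, ∑ k, (χ k)⁻¹ ^ 2 * c k i * c k j)
            = ∑ k, ∑ j, (χ k)⁻¹ ^ 2 * c k i * c k j :=
          fun i => Finset.sum_comm
        rw [Finset.sum_congr rfl fun i _ => h1 i, Finset.sum_comm]
        refine Finset.sum_congr rfl fun k _ => ?_
        rw [sq (∑ i, c k i), Finset.sum_mul_sum, Finset.mul_sum]
        refine Finset.sum_congr rfl fun i _ => ?_
        rw [Finset.mul_sum]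
        exact Finset.sum_congr rfl fun j _ => by ring
    _ ≤ ∑ k, (χ k)⁻¹ ^ 2 * ((∑ i, χ i) * ∑ i, (χ i)⁻¹ * (c k i) ^ 2) := by
        exact Finset.sum_le_sum fun k _ =>
          mul_le_mul_of_nonneg_left (key k) (by positivity)
    _ = (∑ i, χ i) * ∑ i, ∑ k, (χ k)⁻¹ ^ 2 * (χ i)⁻¹ * (c k i) ^ 2 := by
        simp only [Finset.mul_sum]
        rw [Finset.sum_comm]
        refine Finset.sum_congr rfl fun k _ => Finset.sum_congr rfl fun i _ => by ring
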